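/- arXiv:2212.14218 — 4 statements merged into one kernel-verified Lean document; each statement's English description precedes it below -/
import Mathlib

section
/- If κ is a subtle cardinal, then κ is a regular cardinal. -/
/-- `C` is a club (closed unbounded set) in the ordinal `o`:
`C ⊆ o`, `C` is closed under limit points `< o`, and `C` is unbounded in `o`. -/
def IsClubIn (o : Ordinal.{0}) (C : Set Ordinal.{0}) : Prop :=
  C ⊆ Set.Iio o ∧
  (∀ δ < o, (∃ β ∈ C, β < δ) → (∀ β < δ, ∃ γ ∈ C, β < γ ∧ γ < δ) → δ ∈ C) ∧
  (∀ β < o, ∃ γ ∈ C, β < γ)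

/-- A cardinal `κ` is subtle if for every club `C ⊆ κ` and every sequence
`⟨A_α : α ∈ C⟩` with `A_α ⊆ α` for all `α ∈ C`, there are `α < β` in `C` with
`A_α = A_β ∩ α`. -/
def Subtle (κ : Cardinal.{0}) : Prop :=
  ∀ C : Set Ordinal, IsClubIn κ.ord C →
    ∀ A : Ordinal → Set Ordinal, (∀ α ∈ C, A α ⊆ Set.Iio α) →
      ∃ α ∈ C, ∃ β ∈ C, α < β ∧ A α = A β ∩ Set.Iio α

/-!
If `κ` were singular, a cofinal sequence `g : λ → κ` with `λ = cf κ < κ` would make the closure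
points of its range above `λ` a club `C`, on which `v δ = min {j | δ < g j}` is regressive and
strictly increasing. Subtlety applied to the singletons `{v δ}` forces two points of `C` to share
a value, a contradiction.
-/

open Set Order Ordinal

theorem Subtle.exists_lt_eq_of_regressive {κ : Cardinal} (h : Subtle κ) {C : Set Ordinal}
    (hC : IsClubIn κ.ord C) {v : Ordinal → Ordinal} (hv : ∀ δ ∈ C, v δ < δ) :
    ∃ α ∈ C, ∃ β ∈ C, α < β ∧ v α = v β := by
  obtain ⟨α, hα, β, hβ, hαβ, hA⟩ :=
    h C hC (fun δ => {v δ}) fun δ hδ => singleton_subset_iff.2 (hv δ hδ)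
  have hvα : v α ∈ ({v β} : Set Ordinal) ∩ Iio α := hA ▸ rfl
  exact ⟨α, hα, β, hβ, hαβ, hvα.1⟩

theorem IsClubIn.inter_Ioi {o l : Ordinal} {C : Set Ordinal} (hC : IsClubIn o C) (hl : l < o) :
    IsClubIn o (C ∩ Ioi l) := by
  obtain ⟨hCo, hCclosed, hCunbdd⟩ := hC
  refine ⟨fun δ hδ => hCo hδ.1, ?_, fun β hβ => ?_⟩
  · rintro δ hδ ⟨β, ⟨hβC, hlβ⟩, hβδ⟩ happrox
    refine ⟨hCclosed δ hδ ⟨β, hβC, hβδ⟩ fun γ hγ => ?_, hlβ.trans hβδ⟩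
    obtain ⟨γ', ⟨hγ'C, -⟩, hγγ'⟩ := happrox γ hγ
    exact ⟨γ', hγ'C, hγγ'⟩
  · obtain ⟨γ, hγC, hγ⟩ := hCunbdd (max β l) (max_lt hβ hl)
    exact ⟨γ, ⟨hγC, (le_max_right β l).trans_lt hγ⟩, (le_max_left β l).trans_lt hγ⟩

theorem exists_monotoneOn_cofinal {o : Ordinal} (ho : IsSuccLimit o) :
    ∃ g : Ordinal → Ordinal, (∀ j < o.cof.ord, g j < o) ∧ MonotoneOn g (Iio o.cof.ord) ∧
      ∀ α < o, ∃ j < o.cof.ord, α < g j := by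
  obtain ⟨f, hf⟩ := exists_isFundamentalSeq (o := o) rfl
  refine ⟨fun j => if hj : j < o.cof.ord then f ⟨j, hj⟩ else 0, fun j hj => ?_,
    fun i hi j hj hij => ?_, fun α hα => ?_⟩
  · simpa only [dif_pos hj] using mem_Iio.1 (f ⟨j, hj⟩).2
  · simp only [dif_pos (mem_Iio.1 hi), dif_pos (mem_Iio.1 hj)]
    exact Subtype.mono_coe _ (hf.strictMono.monotone (a := ⟨i, hi⟩) (b := ⟨j, hj⟩) hij)
  · obtain ⟨_, ⟨j, rfl⟩, hαj⟩ := hf.isCofinal_range ⟨α + 1, ho.add_one_lt hα⟩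
    exact ⟨j, j.2, by simpa only [dif_pos (mem_Iio.1 j.2)] using (lt_add_one α).trans_le hαj⟩

section CofinalSequence

variable {o l : Ordinal} {g : Ordinal → Ordinal}

theorem isClubIn_setOf_exists_mem_Ioc (hg_lt : ∀ j < l, g j < o)
    (hg_cof : ∀ α < o, ∃ j < l, α < g j) :
    IsClubIn o {δ | δ < o ∧ ∀ β < δ, ∃ j < l, g j ∈ Ioc β δ} := by
  refine ⟨fun δ hδ => hδ.1, fun δ hδ _ happrox => ⟨hδ, fun β hβ => ?_⟩, fun β hβ => ?_⟩
  · obtain ⟨γ, ⟨-, hγ⟩, hβγ, hγδ⟩ := happrox β hβ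
    obtain ⟨j, hj, hβj, hjγ⟩ := hγ β hβγ
    exact ⟨j, hj, hβj, hjγ.trans hγδ.le⟩
  · obtain ⟨j, hj, hβj⟩ := hg_cof β hβ
    exact ⟨g j, ⟨hg_lt j hj, fun γ hγ => ⟨j, hj, hγ, le_rfl⟩⟩, hβj⟩

theorem csInf_lt_csInf_of_mem_Ioc (hg : MonotoneOn g (Iio l)) {α β : Ordinal}
    (hβ : {i | i < l ∧ β < g i}.Nonempty) {j : Ordinal} (hj : j < l) (hαβ : g j ∈ Ioc α β) :
    sInf {i | i < l ∧ α < g i} < sInf {i | i < l ∧ β < g i} := by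
  obtain ⟨hvβl, hvβ⟩ := csInf_mem hβ
  have hjα : j ∈ {i | i < l ∧ α < g i} := ⟨hj, hαβ.1⟩
  refine (csInf_le' hjα).trans_lt (lt_of_not_ge fun hle => ?_)
  exact (hvβ.trans_le (hg hvβl hj hle)).not_ge hαβ.2

end CofinalSequence

/-- If `κ` is a subtle (uncountable) cardinal, then `κ` is regular. -/
theorem stmt1 (κ : Cardinal.{0}) (hκ : Cardinal.aleph0 < κ) (h : Subtle κ) :
    κ.IsRegular := by
  refine ⟨hκ.le, not_lt.1 fun hcof => ?_⟩
  set l := κ.ord.cof.ord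
  have hl : l < κ.ord := Cardinal.ord_lt_ord.2 hcof
  obtain ⟨g, hg_lt, hg_mono, hg_cof⟩ := exists_monotoneOn_cofinal (Cardinal.isSuccLimit_ord hκ.le)
  have hC := (isClubIn_setOf_exists_mem_Ioc hg_lt hg_cof).inter_Ioi hl
  set v : Ordinal → Ordinal := fun δ => sInf {j | j < l ∧ δ < g j}
  have hv_lt : ∀ δ < κ.ord, v δ < l := fun δ hδ => (csInf_mem (hg_cof δ hδ)).1
  obtain ⟨α, hα, β, hβ, hαβ, hvαβ⟩ :=
    h.exists_lt_eq_of_regressive hC fun δ hδ => (hv_lt δ hδ.1.1).trans hδ.2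
  obtain ⟨j, hj, hjαβ⟩ := hβ.1.2 α hαβ
  exact (csInf_lt_csInf_of_mem_Ioc hg_mono (hg_cof β hβ.1.1) hj hjαβ).ne hvαβ
end

section
/- If κ is a subtle cardinal, then κ is a strong limit cardinal (hence, being also regular, κ is strongly inaccessible). -/
/-!
A subtle `κ` admits no injective coding `α ↦ A_α` of a club `C` by subsets of a fixed
`ν ≤ min C`: for such a coding the coherence `A_α = A_β ∩ α` provided by subtlety reads
`A_α = A_β`. So a club of `κ` above `ν` has more than `2 ^ |ν|` elements, and so has every
cofinal `S ⊆ κ`, because the club of closure points of `S` above `ν` maps injectively into `S`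
by `β ↦ min (S \ (β + 1))`. For `S = κ` this gives `2 ^ μ < κ` for `μ < κ`; for `S` the range
of a fundamental sequence of length `cf κ < κ` it would give `2 ^ cf κ < cf κ`.
-/

open Cardinal Set Order

theorem Ordinal.mk_le_mk_of_exists_mem_Ioc {S T : Set Ordinal} (hT : ∀ β ∈ T, ∃ x ∈ S, β < x)
    (hST : ∀ α ∈ T, ∀ β ∈ T, α < β → ∃ x ∈ S, α < x ∧ x ≤ β) : #T ≤ #S := by
  let next : T → S := fun β => ⟨sInf {x ∈ S | β.1 < x}, (csInf_mem (hT β.1 β.2)).1⟩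
  have lt_next (β : T) : β.1 < next β := (csInf_mem (hT β.1 β.2)).2
  have next_strictMono : StrictMono next := fun α β hαβ => by
    obtain ⟨x, hxS, hαx, hxβ⟩ := hST α α.2 β β.2 hαβ
    have next_le : (next α : Ordinal) ≤ x := csInf_le' ⟨hxS, hαx⟩
    exact next_le.trans_lt (hxβ.trans_lt (lt_next β))
  exact mk_le_of_injective next_strictMono.injective

theorem isClubIn_setOf_approached {o ν : Ordinal} (ho : IsSuccLimit o) (hν : ν < o)
    {S : Set Ordinal} (hSo : S ⊆ Iio o) (hS : ∀ α < o, ∃ x ∈ S, α ≤ x) :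
    IsClubIn o {β | ν ≤ β ∧ β < o ∧ ∀ α < β, ∃ x ∈ S, α < x ∧ x ≤ β} := by
  refine ⟨fun β hβ => hβ.2.1, ?_, fun β hβ => ?_⟩
  · rintro δ hδ ⟨β, hβ, hβδ⟩ hacc
    refine ⟨hβ.1.trans hβδ.le, hδ, fun α hα => ?_⟩
    obtain ⟨γ, hγ, hαγ, hγδ⟩ := hacc α hα
    obtain ⟨x, hx, hαx, hxγ⟩ := hγ.2.2 α hαγ
    exact ⟨x, hx, hαx, hxγ.trans hγδ.le⟩
  · obtain ⟨x, hx, hle⟩ := hS (succ (max β ν)) (ho.succ_lt (max_lt hβ hν))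
    have hlt : max β ν < x := (lt_succ _).trans_le hle
    exact ⟨x, ⟨(le_max_right _ _).trans hlt.le, hSo hx, fun α hα => ⟨x, hx, hα, le_rfl⟩⟩,
      (le_max_left _ _).trans_lt hlt⟩

namespace Subtle

variable {κ : Cardinal.{0}}

theorem not_injOn (h : Subtle κ) {C : Set Ordinal} (hC : IsClubIn κ.ord C) {ν : Ordinal}
    (hν : ∀ α ∈ C, ν ≤ α) {A : Ordinal → Set Ordinal} (hA : ∀ α ∈ C, A α ⊆ Iio ν) :
    ¬ InjOn A C := by
  intro hinj
  have hA_Iio {α β} (hα : α ∈ C) (hβ : β ∈ C) : A β ⊆ Iio α :=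
    (hA β hβ).trans (Iio_subset_Iio (hν α hα))
  obtain ⟨α, hα, β, hβ, hαβ, hcoh⟩ := h C hC A fun α hα => hA_Iio hα hα
  rw [inter_eq_left.2 (hA_Iio hα hβ)] at hcoh
  exact hαβ.ne (hinj hα hβ hcoh)

theorem mk_set_Iio_lt_mk_of_isClubIn (h : Subtle κ) {C : Set Ordinal} (hC : IsClubIn κ.ord C)
    {ν : Ordinal} (hν : ∀ α ∈ C, ν ≤ α) : #(Set (Iio ν)) < #C := by
  classical
  refine lt_of_not_ge fun ⟨e⟩ => h.not_injOn hC hν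
    (A := fun α => if hα : α ∈ C then Subtype.val '' e ⟨α, hα⟩ else ∅) ?_ ?_
  · intro α hα
    rw [dif_pos hα]
    rintro _ ⟨γ, -, rfl⟩
    exact γ.2
  · intro α hα β hβ hAeq
    simp only [dif_pos hα, dif_pos hβ] at hAeq
    exact congrArg Subtype.val (e.injective (image_injective.2 Subtype.val_injective hAeq))

theorem mk_set_Iio_lt_mk_of_isCofinal (h : Subtle κ) (hκ : ℵ₀ ≤ κ) {ν : Ordinal}
    (hν : ν < κ.ord) {s : Set (Iio κ.ord)} (hs : IsCofinal s) : #(Set (Iio ν)) < #s := by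
  have hlim := isSuccLimit_ord hκ
  set S : Set Ordinal := Subtype.val '' s
  have hSκ : S ⊆ Iio κ.ord := by
    rintro _ ⟨x, -, rfl⟩
    exact x.2
  have hS (α) (hα : α < κ.ord) : ∃ x ∈ S, α ≤ x := by
    obtain ⟨x, hx, hαx⟩ := hs ⟨α, hα⟩
    exact ⟨x, mem_image_of_mem _ hx, hαx⟩
  rw [← mk_image_eq Subtype.val_injective]
  calc #(Set (Iio ν))
      < #{β | ν ≤ β ∧ β < κ.ord ∧ ∀ α < β, ∃ x ∈ S, α < x ∧ x ≤ β} :=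
        h.mk_set_Iio_lt_mk_of_isClubIn (isClubIn_setOf_approached hlim hν hSκ hS) fun _ hβ => hβ.1
    _ ≤ #S := by
      refine Ordinal.mk_le_mk_of_exists_mem_Ioc (fun β hβ => ?_) fun α _ β hβ hαβ => hβ.2.2 α hαβ
      obtain ⟨x, hx, hle⟩ := hS _ (hlim.succ_lt hβ.2.1)
      exact ⟨x, hx, (lt_succ β).trans_le hle⟩

theorem isStrongLimit (h : Subtle κ) (hκ : ℵ₀ ≤ κ) : κ.IsStrongLimit := by
  refine ⟨(aleph0_pos.trans_le hκ).ne', fun μ hμ => ?_⟩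
  have := h.mk_set_Iio_lt_mk_of_isCofinal hκ (ord_lt_ord.2 hμ) IsCofinal.univ
  rwa [mk_univ, mk_set, mk_Iio_ordinal, mk_Iio_ordinal, card_ord, card_ord, ← lift_two_power,
    lift_lt] at this

theorem le_cof_ord (h : Subtle κ) (hκ : ℵ₀ ≤ κ) : κ ≤ κ.ord.cof := by
  by_contra! hcof
  obtain ⟨f, hf⟩ := Ordinal.exists_isFundamentalSeq (o := κ.ord) rfl
  have := h.mk_set_Iio_lt_mk_of_isCofinal hκ (ord_lt_ord.2 hcof) hf.isCofinal_range
  rw [mk_set] at this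
  exact (this.trans_le mk_range_le).not_gt (cantor _)

end Subtle

/-- If `κ` is a subtle (uncountable) cardinal, then `κ` is a strong limit cardinal;
hence (being also regular) `κ` is strongly inaccessible. -/
theorem stmt2 (κ : Cardinal.{0}) (hκ : Cardinal.aleph0 < κ) (h : Subtle κ) :
    κ.IsStrongLimit ∧ κ.IsInaccessible := by
  have hsl := h.isStrongLimit hκ.le
  exact ⟨hsl, hκ, h.le_cof_ord hκ.le, hsl.isStrongPrelimit⟩
end

section
/- For any logic L (with a notion of elementary submodel satisfying reducts and expansions by constants), the Löwenheim–Skolem–Tarski spectrum LSTS(L) is a closed class of cardinals: the supremum of any strictly increasing sequence of cardinals in LSTS(L) is again in LSTS(L). -/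
/-- An abstract logic with a notion of elementary substructure: a class of
structures (of countable signature), each with an underlying set, and a predicate
saying that a subset of the underlying set carries an `L`-elementary substructure. -/
structure LogicWithElem where
  /-- the structures (of countable signature) for the logic -/
  Struc : Type 1
  /-- the underlying set of a structure -/
  carrier : Struc → Type
  /-- the subset carries an `L`-elementary substructure of the given structure -/
  ElemSubOn : (A : Struc) → Set (carrier A) → Prop

/-- `μ` belongs to the Löwenheim–Skolem–Tarski spectrum `LSTS(L)`: for every
structure `𝔄` (of countable signature) and every `S ⊆ |𝔄|` with `|S| < μ` there is
`𝔅 ≺_L 𝔄` with `S ⊆ |𝔅|` and `‖𝔅‖ < μ`. -/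
def InLSTS (L : LogicWithElem) (μ : Cardinal.{0}) : Prop :=
  ∀ (A : L.Struc) (S : Set (L.carrier A)), Cardinal.mk ↥S < μ →
    ∃ B : Set (L.carrier A), S ⊆ B ∧ Cardinal.mk ↥B < μ ∧ L.ElemSubOn A B

theorem inLSTS_csSup {L : LogicWithElem} {s : Set Cardinal.{0}} (hs : BddAbove s)
    (h : ∀ μ ∈ s, InLSTS L μ) : InLSTS L (sSup s) := by
  intro A S hS
  obtain ⟨μ, hμ, hSμ⟩ := exists_lt_of_lt_csSup' hS
  obtain ⟨B, hSB, hB, hBelem⟩ := h μ hμ A S hSμ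
  exact ⟨B, hSB, hB.trans_le (le_csSup hs hμ), hBelem⟩

theorem stmt8_general (L : LogicWithElem) (δ : Ordinal.{0})
    (f : Ordinal → Cardinal.{0})
    (hmem : ∀ α < δ, InLSTS L (f α)) :
    InLSTS L (sSup (f '' Set.Iio δ)) := by
  refine inLSTS_csSup Cardinal.bddAbove_of_small ?_
  rintro _ ⟨α, hα, rfl⟩
  exact hmem α hα

/-- Lemma 1.8: `LSTS(L)` is a closed class of cardinals: the supremum of any
(nonempty) strictly increasing sequence of cardinals in `LSTS(L)` is again in
`LSTS(L)`. -/
theorem stmt8 (L : LogicWithElem) (δ : Ordinal.{0}) (hδ : δ ≠ 0)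
    (f : Ordinal → Cardinal.{0})
    (hmono : ∀ α β : Ordinal, α < β → β < δ → f α < f β)
    (hmem : ∀ α < δ, InLSTS L (f α)) :
    InLSTS L (sSup (f '' Set.Iio δ)) :=
  stmt8_general L δ f hmem
end

section
/- The cardinal 2^{ℵ₀} is not in WCS(L^{II}): there is a <2^{ℵ₀}-satisfiable full second-order theory in a signature of size 2^{ℵ₀} with no model. -/
/-!
In a model of `TPω`, extensionality holds, and second-order induction shows that every element
having a member is one of the numerals `c_{n}` (the von Neumann naturals `Iio n`), with
`c_{n} E c_a ↔ n ∈ a`. So `d` has the same members as `c_a` for `a = {n | c_{n} E d}`, hence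
`d = c_a`, contradicting `d ≠ c_a`. A subtheory of size `< 2^ℵ₀` omits some sentence `d ≠ c_a`,
and is then satisfied by the standard structure with `d` interpreted as `a`.
-/

/-- Terms of (monadic, full) second-order logic over a signature with constants
`C` and one binary relation: first-order variables and constants. -/
inductive SOTerm (C : Type) (n : ℕ) : Type
  | var : Fin n → SOTerm C n
  | const : C → SOTerm C n

/-- Formulas of (monadic, full) second-order logic `L^II` over a signature with
constants `C` and one binary relation `E`, with `n` free first-order variables and
`m` free (monadic) second-order variables. -/
inductive SOForm (C : Type) : ℕ → ℕ → Type
  | rel {n m} : SOTerm C n → SOTerm C n → SOForm C n m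
  | eq {n m} : SOTerm C n → SOTerm C n → SOForm C n m
  | inSO {n m} : SOTerm C n → Fin m → SOForm C n m
  | not {n m} : SOForm C n m → SOForm C n m
  | and {n m} : SOForm C n m → SOForm C n m → SOForm C n m
  | all {n m} : SOForm C (n + 1) m → SOForm C n m
  | allSO {n m} : SOForm C n (m + 1) → SOForm C n m

/-- Value of a term under interpretations of the constants and a valuation. -/
def SOTerm.val {C : Type} {A : Type u} (cI : C → A) {n : ℕ} (v : Fin n → A) : SOTerm C n → A
  | .var i => v i
  | .const c => cI c

/-- Full second-order satisfaction: second-order quantifiers range over **all**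
subsets of the domain. -/
def SOForm.Realize {C : Type} {A : Type u} (cI : C → A) (E : A → A → Prop) :
    ∀ {n m : ℕ}, SOForm C n m → (Fin n → A) → (Fin m → Set A) → Prop
  | _, _, .rel t₁ t₂, v, _ => E (t₁.val cI v) (t₂.val cI v)
  | _, _, .eq t₁ t₂, v, _ => t₁.val cI v = t₂.val cI v
  | _, _, .inSO t i, v, w => t.val cI v ∈ w i
  | _, _, .not φ, v, w => ¬ φ.Realize cI E v w
  | _, _, .and φ ψ, v, w => φ.Realize cI E v w ∧ ψ.Realize cI E v w
  | _, _, .all φ, v, w => ∀ a : A, φ.Realize cI E (Fin.snoc v a) w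
  | _, _, .allSO φ, v, w => ∀ X : Set A, φ.Realize cI E v (Fin.snoc w X)

/-- Second-order sentences. -/
abbrev SOSent (C : Type) := SOForm C 0 0

/-- The constants of the witness signature: a constant `c_a` for each
`a ∈ 𝒫(ω)` and a further constant `d`. -/
abbrev ConstPω : Type := (Set ℕ) ⊕ Unit

/-- Interpretation of the constants in the standard structure `⟨𝒫(ω), a, ∈⟩_{a∈𝒫(ω)}`,
with `d` interpreted as `dv`. -/
def stdConst (dv : Set ℕ) : ConstPω → Set ℕ := fun c => Sum.elim id (fun _ => dv) c

/-- Membership on `𝒫(ω)`: `x ∈ y` iff `x` is the von Neumann natural `n` and `n ∈ y`. -/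
def stdMem : Set ℕ → Set ℕ → Prop := fun x y => ∃ n : ℕ, x = Set.Iio n ∧ n ∈ y

/-- The witness theory: the full second-order theory of `⟨𝒫(ω), a, ∈⟩_{a∈𝒫(ω)}`
(all sentences holding under every interpretation of `d`), together with the
sentences `d ≠ c_a` for every `a ∈ 𝒫(ω)`. -/
def TPω : Set (SOSent ConstPω) :=
  {φ | ∀ dv : Set ℕ, φ.Realize (stdConst dv) stdMem Fin.elim0 Fin.elim0} ∪
  {φ | ∃ a : Set ℕ,
    φ = .not (.eq (.const (Sum.inr ())) (.const (Sum.inl a)))}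

namespace SOForm

variable {C : Type} {n m : ℕ}

def imp (φ ψ : SOForm C n m) : SOForm C n m := .not (.and φ (.not ψ))

def or (φ ψ : SOForm C n m) : SOForm C n m := .not (.and (.not φ) (.not ψ))

def iff (φ ψ : SOForm C n m) : SOForm C n m := .and (φ.imp ψ) (ψ.imp φ)

variable {A : Type u} {cI : C → A} {E : A → A → Prop} {v : Fin n → A} {w : Fin m → Set A}
  {φ ψ : SOForm C n m}

@[simp] lemma realize_imp :
    (φ.imp ψ).Realize cI E v w ↔ (φ.Realize cI E v w → ψ.Realize cI E v w) := by
  simp [imp, Realize]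

@[simp] lemma realize_or :
    (φ.or ψ).Realize cI E v w ↔ (φ.Realize cI E v w ∨ ψ.Realize cI E v w) := by
  simp [or, Realize, or_iff_not_and_not]

@[simp] lemma realize_iff :
    (φ.iff ψ).Realize cI E v w ↔ (φ.Realize cI E v w ↔ ψ.Realize cI E v w) := by
  simp [iff, Realize, iff_iff_implies_and_implies]

end SOForm

section Semantics

variable {A : Type u}

/-- `X` contains the memberless elements and is closed under the von Neumann successor
`u ↦ u ∪ {u}`. -/
def IsSuccClosed (E : A → A → Prop) (X : Set A) : Prop :=
  (∀ u, (∀ y, ¬ E y u) → u ∈ X) ∧ ∀ u v, u ∈ X → (∀ y, E y v ↔ E y u ∨ y = u) → v ∈ X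

def Satisfies {C : Type} (cI : C → A) (E : A → A → Prop) (T : Set (SOSent C)) : Prop :=
  ∀ φ ∈ T, φ.Realize cI E Fin.elim0 Fin.elim0

lemma isSuccClosed_range {E : A → A → Prop} {num : ℕ → A}
    (hzero : ∀ x, (∀ y, ¬ E y x) → x = num 0)
    (hsucc : ∀ n x, (∀ y, E y x ↔ E y (num n) ∨ y = num n) → x = num (n + 1)) :
    IsSuccClosed E (Set.range num) := by
  refine ⟨fun u hu => ⟨0, (hzero u hu).symm⟩, ?_⟩
  rintro _ v ⟨n, rfl⟩ hv
  exact ⟨n + 1, (hsucc n v hv).symm⟩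

end Semantics

section Sentences

variable {C : Type} {A : Type u} (cI : C → A) (E : A → A → Prop)

-- Bound variables are numbered in order of quantification (`Fin.snoc`): `.var 0` is the outermost.
def extensionalitySent : SOSent C :=
  .all (.all (.imp (.all (.iff (.rel (.var 2) (.var 0)) (.rel (.var 2) (.var 1))))
    (.eq (.var 0) (.var 1))))

def membersNatSent : SOSent C :=
  .all (.all (.imp (.rel (.var 0) (.var 1))
    (.allSO (.imp
      (.and (.all (.imp (.all (.not (.rel (.var 3) (.var 2)))) (.inSO (.var 2) 0)))
        (.all (.all (.imp (.inSO (.var 2) 0)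
          (.imp (.all (.iff (.rel (.var 4) (.var 3))
              (.or (.rel (.var 4) (.var 2)) (.eq (.var 4) (.var 2)))))
            (.inSO (.var 3) 0))))))
      (.inSO (.var 0) 0)))))

def zeroSent (c : C) : SOSent C :=
  .all (.imp (.all (.not (.rel (.var 1) (.var 0)))) (.eq (.var 0) (.const c)))

def succSent (c c' : C) : SOSent C :=
  .all (.imp
    (.all (.iff (.rel (.var 1) (.var 0))
      (.or (.rel (.var 1) (.const c)) (.eq (.var 1) (.const c)))))
    (.eq (.var 0) (.const c')))

def relSent (c c' : C) : SOSent C := .rel (.const c) (.const c')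

lemma realize_extensionalitySent :
    extensionalitySent.Realize cI E Fin.elim0 Fin.elim0 ↔
      ∀ x y, (∀ z, E z x ↔ E z y) → x = y := by
  simp [extensionalitySent, SOForm.Realize, SOTerm.val, Fin.snoc]

lemma realize_membersNatSent :
    membersNatSent.Realize cI E Fin.elim0 Fin.elim0 ↔
      ∀ z y, E z y → ∀ X, IsSuccClosed E X → z ∈ X := by
  simp [membersNatSent, IsSuccClosed, SOForm.Realize, SOTerm.val, Fin.snoc]

lemma realize_zeroSent (c : C) :
    (zeroSent c).Realize cI E Fin.elim0 Fin.elim0 ↔ ∀ x, (∀ y, ¬ E y x) → x = cI c := by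
  simp [zeroSent, SOForm.Realize, SOTerm.val, Fin.snoc]

lemma realize_succSent (c c' : C) :
    (succSent c c').Realize cI E Fin.elim0 Fin.elim0 ↔
      ∀ x, (∀ y, E y x ↔ E y (cI c) ∨ y = cI c) → x = cI c' := by
  simp [succSent, SOForm.Realize, SOTerm.val, Fin.snoc]

end Sentences

section StandardModel

open Set

lemma stdMem_Iio_iff {k : ℕ} {y : Set ℕ} : stdMem (Iio k) y ↔ k ∈ y :=
  ⟨fun ⟨_, hn, hny⟩ => Iio_injective hn ▸ hny, fun h => ⟨k, rfl, h⟩⟩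

lemma stdMem_extensional (x y : Set ℕ) (h : ∀ z, stdMem z x ↔ stdMem z y) : x = y := by
  ext k
  simpa only [stdMem_Iio_iff] using h (Iio k)

lemma stdMem_iff_succ (n : ℕ) (z : Set ℕ) :
    stdMem z (Iio (n + 1)) ↔ stdMem z (Iio n) ∨ z = Iio n := by
  constructor
  · rintro ⟨k, rfl, hk⟩
    rcases Nat.lt_succ_iff_lt_or_eq.mp hk with hk | rfl
    exacts [Or.inl ⟨k, rfl, hk⟩, Or.inr rfl]
  · rintro (⟨k, rfl, hk⟩ | rfl)
    exacts [⟨k, rfl, Nat.lt_succ_of_lt hk⟩, ⟨n, rfl, Nat.lt_succ_self n⟩]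

lemma Iio_mem_of_isSuccClosed {X : Set (Set ℕ)} (hX : IsSuccClosed stdMem X) (n : ℕ) :
    Iio n ∈ X := by
  induction n with
  | zero => exact hX.1 _ fun _ ⟨k, _, hk⟩ => Nat.not_lt_zero k hk
  | succ n ih => exact hX.2 _ _ ih (stdMem_iff_succ n)

lemma stdMem_members_nat (z y : Set ℕ) (h : stdMem z y) (X : Set (Set ℕ))
    (hX : IsSuccClosed stdMem X) : z ∈ X := by
  obtain ⟨n, rfl, -⟩ := h
  exact Iio_mem_of_isSuccClosed hX n

lemma stdMem_zero (x : Set ℕ) (h : ∀ y, ¬ stdMem y x) : x = Iio 0 :=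
  stdMem_extensional _ _ fun z => iff_of_false (h z) fun ⟨k, _, hk⟩ => Nat.not_lt_zero k hk

lemma stdMem_succ (n : ℕ) (x : Set ℕ) (h : ∀ y, stdMem y x ↔ stdMem y (Iio n) ∨ y = Iio n) :
    x = Iio (n + 1) :=
  stdMem_extensional _ _ fun z => (h z).trans (stdMem_iff_succ n z).symm

end StandardModel

section Witness

open Set Cardinal

def neSent (a : Set ℕ) : SOSent ConstPω := .not (.eq (.const (.inr ())) (.const (.inl a)))

lemma neSent_injective : Function.Injective neSent := fun a b h => by
  simpa [neSent] using h

lemma mk_constPω : #ConstPω = 2 ^ ℵ₀ := by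
  simpa [mk_sum, mk_set] using add_one_eq (cantor ℵ₀).le

theorem exists_satisfies_of_mk_lt {T₀ : Set (SOSent ConstPω)} (hT₀ : T₀ ⊆ TPω)
    (hcard : #T₀ < 2 ^ ℵ₀) : ∃ dv, Satisfies (stdConst dv) stdMem T₀ := by
  obtain ⟨dv, hdv⟩ : ∃ dv, neSent dv ∉ T₀ := by
    by_contra! hall
    have := mk_preimage_of_injective neSent T₀ neSent_injective
    rw [show neSent ⁻¹' T₀ = Set.univ from eq_univ_of_forall hall, mk_univ, mk_set, mk_nat] at this
    exact this.not_gt hcard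
  refine ⟨dv, fun φ hφ => ?_⟩
  rcases hT₀ hφ with hstd | ⟨a, rfl⟩
  · exact hstd dv
  · exact fun (hda : dv = a) => hdv (hda ▸ hφ)

variable {A : Type u} {cI : ConstPω → A} {E : A → A → Prop}

lemma Satisfies.realize_of_std (h : Satisfies cI E TPω) {φ : SOSent ConstPω}
    (hφ : ∀ dv, φ.Realize (stdConst dv) stdMem Fin.elim0 Fin.elim0) :
    φ.Realize cI E Fin.elim0 Fin.elim0 :=
  h φ (Or.inl hφ)

lemma Satisfies.rel_iff (h : Satisfies cI E TPω) (n : ℕ) (a : Set ℕ) :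
    E (cI (.inl (Iio n))) (cI (.inl a)) ↔ n ∈ a := by
  by_cases hn : n ∈ a
  · exact iff_of_true (h.realize_of_std (φ := relSent (.inl (Iio n)) (.inl a))
      fun _ => stdMem_Iio_iff.2 hn) hn
  · exact iff_of_false (h.realize_of_std (φ := .not (relSent (.inl (Iio n)) (.inl a)))
      fun _ => mt stdMem_Iio_iff.1 hn) hn

lemma Satisfies.exists_eq_of_rel (h : Satisfies cI E TPω) {z y : A} (hzy : E z y) :
    ∃ n, cI (.inl (Iio n)) = z := by
  have hnat := (realize_membersNatSent cI E).1
    (h.realize_of_std fun _ => (realize_membersNatSent _ _).2 stdMem_members_nat)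
  have hzero := (realize_zeroSent cI E (.inl (Iio 0))).1
    (h.realize_of_std fun _ => (realize_zeroSent _ _ _).2 stdMem_zero)
  have hsucc := fun n => (realize_succSent cI E (.inl (Iio n)) (.inl (Iio (n + 1)))).1
    (h.realize_of_std fun _ => (realize_succSent _ _ _ _).2 (stdMem_succ n))
  exact hnat z y hzy _ (isSuccClosed_range hzero hsucc)

theorem not_satisfies_TPω : ¬ Satisfies cI E TPω := by
  intro h
  have hext := (realize_extensionalitySent cI E).1
    (h.realize_of_std fun _ => (realize_extensionalitySent _ _).2 stdMem_extensional)
  set dv : Set ℕ := {n | E (cI (.inl (Iio n))) (cI (.inr ()))}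
  refine h (neSent dv) (Or.inr ⟨dv, rfl⟩) (hext _ _ fun z => ⟨fun hz => ?_, fun hz => ?_⟩)
  · obtain ⟨n, rfl⟩ := h.exists_eq_of_rel hz
    exact (h.rel_iff n dv).2 hz
  · obtain ⟨n, rfl⟩ := h.exists_eq_of_rel hz
    exact (h.rel_iff n dv).1 hz

end Witness

/-- Proposition 2.7(2): `2^ℵ₀ ∉ WCS(L^II)`: the theory `TPω`, in a signature of
size `2^ℵ₀`, is `< 2^ℵ₀`-satisfiable but has no model (in any universe). -/
theorem stmt17 :
    Cardinal.mk ConstPω = 2 ^ Cardinal.aleph0 ∧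
    (∀ T₀ ⊆ TPω, Cardinal.mk ↥T₀ < 2 ^ Cardinal.aleph0 →
      ∃ (A : Type) (cI : ConstPω → A) (E : A → A → Prop),
        ∀ φ ∈ T₀, SOForm.Realize cI E φ Fin.elim0 Fin.elim0) ∧
    ¬ ∃ (A : Type u) (cI : ConstPω → A) (E : A → A → Prop),
        ∀ φ ∈ TPω, SOForm.Realize cI E φ Fin.elim0 Fin.elim0 := by
  refine ⟨mk_constPω, fun T₀ hT₀ hcard => ?_, fun ⟨_, _, _, h⟩ => not_satisfies_TPω h⟩
  obtain ⟨dv, hdv⟩ := exists_satisfies_of_mk_lt hT₀ hcard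
  exact ⟨Set ℕ, stdConst dv, stdMem, hdv⟩
end
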